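/- Let G be a group. For each n ≥ 0 set P_n = G^{n+1}/ΔG, the quotient of the (n+1)-fold product by the diagonal left action of G. Then the assignment n ↦ P_n, with a map f : [0,m] → [0,n] acting by (g₀,…,g_n) ↦ (g_{f(0)},…,g_{f(m)}), defines a multiplicative oversimplicial object in the category of sets. -/
import Mathlib


/-- The diagonal equivalence relation on `G^{n+1}`: `x ∼ y` iff `x = g·y` for some `g ∈ G`. -/
def diagSetoid (G : Type*) [Group G] (n : ℕ) : Setoid (Fin (n + 1) → G) where
  r x y := ∃ g : G, ∀ i, x i = g * y i
  iseqv := by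
    refine ⟨fun x => ⟨1, by simp⟩, ?_, ?_⟩
    · rintro x y ⟨g, h⟩
      exact ⟨g⁻¹, fun i => by rw [h i]; group⟩
    · rintro x y z ⟨g, h⟩ ⟨g', h'⟩
      exact ⟨g * g', fun i => by rw [h i, h' i, mul_assoc]⟩

/-- `P_n = G^{n+1}/ΔG`. -/
def PG (G : Type*) [Group G] (n : ℕ) : Type _ := Quotient (diagSetoid G n)

/-- The contravariant action of a map `f : [0,m] → [0,n]` on `P_• = G^{•+1}/ΔG`. -/
def PGmap (G : Type*) [Group G] {m n : ℕ} (f : Fin (m + 1) → Fin (n + 1)) :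
    PG G n → PG G m :=
  Quotient.map (fun x => x ∘ f) (by rintro x y ⟨g, h⟩; exact ⟨g, fun i => h (f i)⟩)

instance PG.subsingleton_zero (G : Type*) [Group G] : Subsingleton (PG G 0) := by
  constructor
  rintro ⟨x⟩ ⟨y⟩
  exact Quotient.sound ⟨x 0 * (y 0)⁻¹, fun i => by
    have : i = 0 := Fin.fin_one_eq_zero i
    subst this; group⟩

/-- For a group `G` and `P_n = G^{n+1}/ΔG` (diagonal action), the assignment
`n ↦ P_n`, with a set map `f : [0,m] → [0,n]` acting contravariantly by
`(g₀,…,g_n) ↦ (g_{f(0)},…,g_{f(m)})`, is a (contravariant) functor, and it is multiplicative: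
for `n = m + l` the natural map `P_n → P_m ×_{P₀} P_l` induced by the inclusion `[0,m] ⊆ [0,n]`
and the shift `[0,l] → [0,n], i ↦ m+i`, is a bijection. -/
theorem stmt_7 (G : Type*) [Group G] :
    (∀ n : ℕ, PGmap G (id : Fin (n + 1) → Fin (n + 1)) = id) ∧
    (∀ (l' m n : ℕ) (f : Fin (m + 1) → Fin (n + 1)) (h : Fin (l' + 1) → Fin (m + 1)),
      PGmap G (f ∘ h) = PGmap G h ∘ PGmap G f) ∧
    (∀ m l : ℕ,
      Function.Bijective (fun q : PG G (m + l) =>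
        (⟨(PGmap G (fun i : Fin (m + 1) => (⟨i, by omega⟩ : Fin (m + l + 1))) q,
           PGmap G (fun i : Fin (l + 1) => (⟨m + i, by omega⟩ : Fin (m + l + 1))) q),
          Subsingleton.elim _ _⟩ :
        { ab : PG G m × PG G l //
            PGmap G (fun _ : Fin 1 => Fin.last m) ab.1 =
              PGmap G (fun _ : Fin 1 => (0 : Fin (l + 1))) ab.2 }))) := by

  refine ⟨fun n => ?_, fun l' m n f h => ?_, fun m l => ⟨?_, ?_⟩⟩
  · ext q; induction q using Quotient.ind; rfl
  · ext q; induction q using Quotient.ind; rfl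
  · -- injective
    rintro ⟨x⟩ ⟨y⟩ hxy
    have h1 := congrArg (fun p => p.1.1) hxy
    have h2 := congrArg (fun p => p.1.2) hxy
    simp only [PGmap, Quotient.map_mk] at h1 h2
    obtain ⟨g, hg⟩ := Quotient.exact h1
    obtain ⟨g', hg'⟩ := Quotient.exact h2
    have hm : g = g' := by
      have e1 := hg (Fin.last m)
      have e2 := hg' 0
      simp only [Function.comp, Fin.last] at e1 e2
      simp only [Fin.val_zero, Nat.add_zero] at e2
      rw [e1] at e2
      exact mul_right_cancel e2
    refine Quotient.sound ⟨g, fun i => ?_⟩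
    rcases le_or_gt (i : ℕ) m with hi | hi
    · have := hg ⟨i, by omega⟩
      simpa [Function.comp] using this
    · have := hg' ⟨(i : ℕ) - m, by omega⟩
      simp only [Function.comp] at this
      rw [hm]
      have hieq : (⟨m + ((i:ℕ) - m), by omega⟩ : Fin (m + l + 1)) = i := by
        ext; simp; omega
      rwa [hieq] at this
  · -- surjective
    rintro ⟨⟨⟨x⟩, ⟨y⟩⟩, hcomp⟩
    refine ⟨Quotient.mk _ (fun i : Fin (m + l + 1) =>
      if h : (i : ℕ) ≤ m then x ⟨i, by omega⟩
      else x (Fin.last m) * (y 0)⁻¹ * y ⟨(i : ℕ) - m, by omega⟩), ?_⟩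
    refine Subtype.ext (Prod.ext ?_ ?_)
    · simp only [PGmap, Quotient.map_mk]
      refine Quotient.sound ⟨1, fun i => ?_⟩
      simp [Function.comp, i.is_le, Fin.eta]
    · simp only [PGmap, Quotient.map_mk]
      refine Quotient.sound ⟨x (Fin.last m) * (y 0)⁻¹, fun j => ?_⟩
      simp only [Function.comp]
      rcases Nat.eq_zero_or_pos (j : ℕ) with hj | hj
      · have : j = 0 := by ext; simpa using hj
        subst this
        simp [Fin.last]
      · have h1 : ¬ (m + (j : ℕ) ≤ m) := by omega
        simp only [h1, dif_neg, not_false_iff, Nat.add_sub_cancel_left, Fin.eta]
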